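/- For the projective line over a commutative ring B with its standard two-chart covering and d ≤ −2, the first Čech cohomology H^1(ℙ¹_B, O(d); U) is a free B-module of rank −d − 1, and H^0(ℙ¹_B, O(d); U) = 0. -/

import Mathlib

/-!
In coefficients, the image of `B[t]` in `B[t, t⁻¹]` is spanned by the monomials `t^n` with
`n ≥ 0`, and the image of `t^d · B[t⁻¹]` by those with `n ≤ d`. For `d < 0` these two index sets
are disjoint, so the differential is injective; its image is then the span of the monomials with
`n ∉ (d, 0)`, and the cokernel is free on the `−d − 1` monomials `t^n` with `d < n < 0`.
-/

/-- The Čech complex differential of `O(d)` on `ℙ¹_B` for the standard two-chart covering: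
`B[t] × B[t⁻¹] → B[t,t⁻¹]`, `(f, g) ↦ f − t^d · g`, where `B[t⁻¹]` is embedded via
`t ↦ T⁻¹` into the Laurent polynomials. -/
noncomputable def cechP1 (B : Type*) [CommRing B] (d : ℤ) :
    Polynomial B × Polynomial B →ₗ[B] LaurentPolynomial B :=
  (Polynomial.toLaurentAlg.toLinearMap.comp (LinearMap.fst B (Polynomial B) (Polynomial B))) -
    ((LinearMap.mulLeft B (LaurentPolynomial.T d)).comp
      ((Polynomial.aeval (LaurentPolynomial.T (-1))).toLinearMap.comp
        (LinearMap.snd B (Polynomial B) (Polynomial B))))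

open LaurentPolynomial Polynomial

namespace AddMonoidAlgebra

section Semiring

variable {R S M : Type*} [Semiring R] [Semiring S] [Module R S]

theorem disjoint_supported_supported {s t : Set M} (h : Disjoint s t) :
    Disjoint (supported R S s) (supported R S t) :=
  Submodule.disjoint_def.2 fun x hs ht => ext <| Finsupp.ext fun m => by
    by_cases hm : m ∈ s
    · exact mem_supported'.1 ht m (h.notMem_of_mem_left hm)
    · exact mem_supported'.1 hs m hm

theorem isCompl_supported_compl (s : Set M) : IsCompl (supported R S s) (supported R S sᶜ) := by
  refine ⟨disjoint_supported_supported disjoint_compl_right, codisjoint_iff.2 ?_⟩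
  rw [supported_eq_map, supported_eq_map, ← Submodule.map_sup, ← Finsupp.supported_union,
    Set.union_compl_self, Finsupp.supported_univ, Submodule.map_top, LinearEquiv.range]

end Semiring

noncomputable def quotientSupportedEquiv {R S M : Type*} [Ring R] [Ring S] [Module R S]
    (s : Set M) : (AddMonoidAlgebra S M ⧸ supported R S s) ≃ₗ[R] (↥sᶜ →₀ S) :=
  Submodule.quotientEquivOfIsCompl _ _ (isCompl_supported_compl s) ≪≫ₗ supportedEquivFinsupp sᶜ

end AddMonoidAlgebra

open AddMonoidAlgebra

namespace LaurentPolynomial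

variable {R : Type*} [CommSemiring R]

theorem aeval_T_neg_one (g : R[X]) : aeval (T (-1) : R[T;T⁻¹]) g = invert (toLaurent g) := by
  induction g using Polynomial.induction_on' with
  | add p q hp hq => simp only [map_add, hp, hq]
  | monomial n a => simp [← C_mul_X_pow_eq_monomial, T_pow]

theorem toLaurent_mem_supported_Ici (f : R[X]) : toLaurent f ∈ supported R R (Set.Ici 0) := by
  simp [mem_supported]

theorem T_mul_invert_toLaurent_mem_supported_Iic (d : ℤ) (g : R[X]) :
    T d * invert (toLaurent g) ∈ supported R R (Set.Iic d) := by
  refine mem_supported'.2 fun m hm => ?_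
  rw [T, coeff_single_mul_apply, invert_apply, one_mul]
  exact mem_supported'.1 (toLaurent_mem_supported_Ici g) _ (by simp at hm ⊢; omega)

end LaurentPolynomial

section CechP1

variable {B : Type*} [CommRing B]

theorem cechP1_apply (d : ℤ) (f g : B[X]) :
    cechP1 B d (f, g) = toLaurent f - T d * invert (toLaurent g) := by
  simp [cechP1, aeval_T_neg_one]

theorem range_cechP1 (d : ℤ) :
    LinearMap.range (cechP1 B d) = supported B B (Set.Ici 0 ∪ Set.Iic d) := by
  apply le_antisymm
  · rintro _ ⟨⟨f, g⟩, rfl⟩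
    rw [cechP1_apply]
    exact sub_mem (supported_mono Set.subset_union_left (toLaurent_mem_supported_Ici f))
      (supported_mono Set.subset_union_right (T_mul_invert_toLaurent_mem_supported_Iic d g))
  · rw [supported_eq_span_single, Submodule.span_le]
    rintro _ ⟨n, hn | hn, rfl⟩
    · refine ⟨(X ^ n.toNat, 0), ?_⟩
      simp [cechP1_apply, single_eq_C_mul_T, Int.toNat_of_nonneg (show 0 ≤ n from hn)]
    · refine ⟨(0, -X ^ (d - n).toNat), ?_⟩
      rw [cechP1_apply, map_zero, map_neg, map_neg, mul_neg, zero_sub, neg_neg, toLaurent_X_pow,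
        invert_T, ← T_add]
      show T _ = T n
      have : 0 ≤ d - n := by simp at hn; omega
      congr 1
      omega

theorem ker_cechP1 {d : ℤ} (hd : d < 0) : LinearMap.ker (cechP1 B d) = ⊥ := by
  refine (Submodule.eq_bot_iff _).2 fun ⟨f, g⟩ hfg => ?_
  rw [LinearMap.mem_ker, cechP1_apply, sub_eq_zero] at hfg
  have hf : toLaurent f = 0 :=
    Submodule.disjoint_def.1 (disjoint_supported_supported (Set.Ici_disjoint_Iic.2 (by omega)))
      _ (toLaurent_mem_supported_Ici f) (hfg ▸ T_mul_invert_toLaurent_mem_supported_Iic d g)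
  have hg : toLaurent g = 0 := by
    rwa [hf, eq_comm, (isUnit_T d).mul_right_eq_zero, map_eq_zero_iff _ invert.injective] at hfg
  simp [Polynomial.toLaurent_eq_zero.1 hf, Polynomial.toLaurent_eq_zero.1 hg]

variable (B) in
noncomputable def quotientRangeCechP1Equiv (d : ℤ) :
    (B[T;T⁻¹] ⧸ LinearMap.range (cechP1 B d)) ≃ₗ[B] (Set.Ioo d 0 →₀ B) :=
  Submodule.quotEquivOfEq _ _ (range_cechP1 d) ≪≫ₗ quotientSupportedEquiv _ ≪≫ₗ
    Finsupp.domLCongr (Equiv.setCongr (by ext n; simp [and_comm]))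

end CechP1

/-- **Cohomology of `O(d)` on `ℙ¹_B` for `d ≤ -2`.** With respect to the standard two-chart
covering, `H⁰(ℙ¹_B, O(d))` (the kernel of the Čech differential) vanishes, and
`H¹(ℙ¹_B, O(d))` (the cokernel) is a free `B`-module of rank `−d − 1`. -/
theorem stmt_17 (B : Type*) [CommRing B] (d : ℤ) (hd : d ≤ -2) :
    LinearMap.ker (cechP1 B d) = ⊥ ∧
    Nonempty (Module.Basis (Fin (d.natAbs - 1)) B
      (LaurentPolynomial B ⧸ LinearMap.range (cechP1 B d))) := by
  refine ⟨ker_cechP1 (by omega), ⟨?_⟩⟩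
  have hcard : Fintype.card (Set.Ioo d 0) = d.natAbs - 1 := by simp; omega
  exact (Finsupp.basisSingleOne.map (quotientRangeCechP1Equiv B d).symm).reindex
    (Fintype.equivFinOfCardEq hcard)
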